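/- arXiv:2006.02263 — 4 statements merged into one kernel-verified Lean document; each statement's English description precedes it below -/
import Mathlib

section
/- Let I ⊆ ℕ be a p-adic interval of rank r ≥ 1 (i.e. I = {y ∈ ℕ : k·p^r ≤ y < (k+1)·p^r} for some k ∈ ℕ) and let I' ⊆ I be a p-adic interval of rank r − 1. Then the function f = p^(−(r−1))·1_{I'} − p^(−r)·1_I belongs to ℓ²(ℕ;ℂ), is nonzero, and satisfies D^α f = κ^(r−1) · f, i.e. f is an eigenfunction of the Dyson hierarchical Laplacian D^α with eigenvalue κ^(r−1). -/
/-- `kappa p α = p ^ (-α)`. -/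
noncomputable def kappa (p : ℕ) (α : ℝ) : ℝ := (p : ℝ) ^ (-α)

/-- The p-adic interval of rank `r` containing `x`:
`{y : ℕ | ⌊y / p^r⌋ = ⌊x / p^r⌋} = {y | k p^r ≤ y < (k+1) p^r}` with `k = x / p^r`. -/
def block (p r x : ℕ) : Finset ℕ :=
  Finset.Ico (x / p ^ r * p ^ r) ((x / p ^ r + 1) * p ^ r)

/-- `D` is the Dyson hierarchical Laplacian `D^α` on `ℓ²(ℕ; ℂ)`:
`(D f)(x) = Σ_{r ≥ 1} (1 - κ) κ^(r-1) (f x - p^(-r) Σ_{y ∈ I_r(x)} f y)`. -/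
def IsDyson (p : ℕ) (α : ℝ)
    (D : lp (fun _ : ℕ => ℂ) 2 →L[ℂ] lp (fun _ : ℕ => ℂ) 2) : Prop :=
  ∀ (f : lp (fun _ : ℕ => ℂ) 2) (x : ℕ),
    D f x = ∑' r : ℕ, (((1 - kappa p α) * kappa p α ^ r : ℝ) : ℂ) *
      (f x - ((p : ℂ) ^ (r + 1))⁻¹ * ∑ y ∈ block p (r + 1) x, f y)

lemma mem_padic {p : ℕ} (hp : 0 < p) {n a y : ℕ} :
    y ∈ Finset.Ico (a * p ^ n) ((a + 1) * p ^ n) ↔ y / p ^ n = a := by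
  have hpn : 0 < p ^ n := pow_pos hp n
  rw [Finset.mem_Ico]
  constructor
  · rintro ⟨h1, h2⟩
    exact Nat.div_eq_of_lt_le h1 h2
  · rintro rfl
    have h := Nat.mod_add_div' y (p ^ n)
    have h2 := Nat.mod_lt y hpn
    exact ⟨Nat.div_mul_le_self y _, by rw [add_mul, one_mul]; omega⟩

lemma padic_subset_or_disjoint {p : ℕ} (hp : 0 < p) {m n a b : ℕ} (hmn : m ≤ n) :
    Finset.Ico (a * p ^ m) ((a + 1) * p ^ m) ⊆ Finset.Ico (b * p ^ n) ((b + 1) * p ^ n) ∨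
    Disjoint (Finset.Ico (a * p ^ m) ((a + 1) * p ^ m))
      (Finset.Ico (b * p ^ n) ((b + 1) * p ^ n)) := by
  have key : ∀ y, y ∈ Finset.Ico (a * p ^ m) ((a + 1) * p ^ m) →
      y / p ^ n = a / p ^ (n - m) := by
    intro y hy
    rw [mem_padic hp] at hy
    rw [← hy, Nat.div_div_eq_div_mul, ← pow_add, Nat.add_sub_cancel' hmn]
  by_cases h : a / p ^ (n - m) = b
  · exact Or.inl fun y hy => (mem_padic hp).mpr ((key y hy).trans h)
  · refine Or.inr (Finset.disjoint_left.mpr fun y hy hy' => ?_)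
    rw [mem_padic hp] at hy'
    exact h ((key y hy).symm.trans hy')

lemma padic_nonempty {p : ℕ} (hp : 0 < p) {n a : ℕ} :
    (Finset.Ico (a * p ^ n) ((a + 1) * p ^ n)).Nonempty := by
  rw [Finset.nonempty_Ico]
  have := pow_pos hp n
  rw [add_mul, one_mul]; omega

lemma padic_card {p n a : ℕ} :
    (Finset.Ico (a * p ^ n) ((a + 1) * p ^ n)).card = p ^ n := by
  rw [Nat.card_Ico, add_mul, one_mul]; omega

lemma sum_ind_le {p : ℕ} (hp : 0 < p) {m n a b : ℕ} (hnm : n ≤ m) :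
    ∑ y ∈ Finset.Ico (a * p ^ m) ((a + 1) * p ^ m),
      (if y ∈ Finset.Ico (b * p ^ n) ((b + 1) * p ^ n) then (1:ℂ) else 0) =
    if Finset.Ico (b * p ^ n) ((b + 1) * p ^ n) ⊆ Finset.Ico (a * p ^ m) ((a + 1) * p ^ m)
    then (p:ℂ) ^ n else 0 := by
  rw [Finset.sum_ite_mem, Finset.sum_const, nsmul_eq_mul, mul_one]
  rcases padic_subset_or_disjoint hp hnm (a := b) (b := a) with h | h
  · rw [if_pos h, Finset.inter_eq_right.mpr h, padic_card]
    push_cast; ring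
  · obtain ⟨y, hy⟩ := padic_nonempty hp (n := n) (a := b)
    rw [if_neg fun hs => Finset.disjoint_left.mp h hy (hs hy),
      Finset.disjoint_iff_inter_eq_empty.mp h.symm, Finset.card_empty]
    simp

lemma sum_ind_ge {p : ℕ} (hp : 0 < p) {m n a b : ℕ} (hmn : m ≤ n) :
    ∑ y ∈ Finset.Ico (a * p ^ m) ((a + 1) * p ^ m),
      (if y ∈ Finset.Ico (b * p ^ n) ((b + 1) * p ^ n) then (1:ℂ) else 0) =
    if Finset.Ico (a * p ^ m) ((a + 1) * p ^ m) ⊆ Finset.Ico (b * p ^ n) ((b + 1) * p ^ n)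
    then (p:ℂ) ^ m else 0 := by
  rw [Finset.sum_ite_mem, Finset.sum_const, nsmul_eq_mul, mul_one]
  rcases padic_subset_or_disjoint hp hmn (a := a) (b := b) with h | h
  · rw [if_pos h, Finset.inter_eq_left.mpr h, padic_card]
    push_cast; ring
  · obtain ⟨y, hy⟩ := padic_nonempty hp (n := m) (a := a)
    rw [if_neg fun hs => Finset.disjoint_left.mp h hy (hs hy),
      Finset.disjoint_iff_inter_eq_empty.mp h, Finset.card_empty]
    simp

/-- The eigenfunction. -/
noncomputable def eigF (p s k k' : ℕ) : ℕ → ℂ := fun x =>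
  ((p : ℂ) ^ s)⁻¹ *
      (if x ∈ Finset.Ico (k' * p ^ s) ((k' + 1) * p ^ s) then 1 else 0) -
    ((p : ℂ) ^ (s + 1))⁻¹ *
      (if x ∈ Finset.Ico (k * p ^ (s + 1)) ((k + 1) * p ^ (s + 1)) then 1 else 0)

lemma eig_sum {p : ℕ} (hp : 2 ≤ p) {s k k' : ℕ}
    (hsub : Finset.Ico (k' * p ^ s) ((k' + 1) * p ^ s) ⊆
      Finset.Ico (k * p ^ (s + 1)) ((k + 1) * p ^ (s + 1))) (m x : ℕ) :
    ∑ y ∈ block p m x, eigF p s k k' y =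
      if s + 1 ≤ m then 0 else (p : ℂ) ^ m * eigF p s k k' x := by
  have hp0 : 0 < p := by omega
  have hpC : (p : ℂ) ≠ 0 := Nat.cast_ne_zero.mpr (by omega)
  unfold block eigF
  rw [Finset.sum_sub_distrib, ← Finset.mul_sum, ← Finset.mul_sum]
  by_cases hm : s + 1 ≤ m
  · rw [if_pos hm, sum_ind_le hp0 (le_trans (Nat.le_succ s) hm), sum_ind_le hp0 hm]
    rcases padic_subset_or_disjoint hp0 hm (a := k) (b := x / p ^ m) with h | h
    · rw [if_pos h, if_pos (hsub.trans h), inv_mul_cancel₀ (pow_ne_zero _ hpC),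
        inv_mul_cancel₀ (pow_ne_zero _ hpC), sub_self]
    · obtain ⟨y, hy⟩ := padic_nonempty hp0 (n := s + 1) (a := k)
      obtain ⟨y', hy'⟩ := padic_nonempty hp0 (n := s) (a := k')
      rw [if_neg (fun hs => Finset.disjoint_left.mp (h.mono_left hsub) hy' (hs hy')),
        if_neg (fun hs => Finset.disjoint_left.mp h hy (hs hy))]
      simp
  · rw [if_neg hm]
    have hms : m ≤ s := by omega
    rw [sum_ind_ge hp0 hms, sum_ind_ge hp0 (by omega : m ≤ s + 1)]
    have hxB : x ∈ Finset.Ico (x / p ^ m * p ^ m) ((x / p ^ m + 1) * p ^ m) :=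
      (mem_padic hp0).mpr rfl
    rcases padic_subset_or_disjoint hp0 hms (a := x / p ^ m) (b := k') with h' | h'
    · have hI := h'.trans hsub
      rw [if_pos h', if_pos hI, if_pos (h' hxB), if_pos (hI hxB)]
      ring
    · have hx' : x ∉ Finset.Ico (k' * p ^ s) ((k' + 1) * p ^ s) :=
        Finset.disjoint_left.mp h' hxB
      rw [if_neg (fun hs => hx' (hs hxB)), if_neg hx']
      rcases padic_subset_or_disjoint hp0 (le_trans hms (Nat.le_succ s))
          (a := x / p ^ m) (b := k) with h2 | h2
      · rw [if_pos h2, if_pos (h2 hxB)]; ring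
      · rw [if_neg (fun hs => (Finset.disjoint_left.mp h2 hxB) (hs hxB)),
          if_neg (Finset.disjoint_left.mp h2 hxB)]
        ring

lemma eig_ptwise {p : ℕ} (hp : 2 ≤ p) {α : ℝ} (hα : 0 < α) {s k k' : ℕ}
    (hsub : Finset.Ico (k' * p ^ s) ((k' + 1) * p ^ s) ⊆
      Finset.Ico (k * p ^ (s + 1)) ((k + 1) * p ^ (s + 1)))
    {D : lp (fun _ : ℕ => ℂ) 2 →L[ℂ] lp (fun _ : ℕ => ℂ) 2} (hD : IsDyson p α D)
    (f : lp (fun _ : ℕ => ℂ) 2) (hf : ⇑f = eigF p s k k') (x : ℕ) :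
    D f x = ((kappa p α ^ s : ℝ) : ℂ) * eigF p s k k' x := by
  have hpC : (p : ℂ) ≠ 0 := Nat.cast_ne_zero.mpr (by omega)
  have hpR1 : (1 : ℝ) < (p : ℝ) := by exact_mod_cast (by omega : 1 < p)
  have hq0 : 0 < kappa p α := Real.rpow_pos_of_pos (by linarith) _
  have hq1 : kappa p α < 1 :=
    Real.rpow_lt_one_of_one_lt_of_neg hpR1 (neg_lt_zero.mpr hα)
  set q := kappa p α with hq
  rw [hD f x, hf]
  have hterm : ∀ j : ℕ,
      (((1 - q) * q ^ j : ℝ) : ℂ) *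
        (eigF p s k k' x - ((p : ℂ) ^ (j + 1))⁻¹ * ∑ y ∈ block p (j + 1) x, eigF p s k k' y)
      = if s ≤ j then (((1 - q) * q ^ j : ℝ) : ℂ) * eigF p s k k' x else 0 := by
    intro j
    rw [eig_sum hp hsub (j + 1) x]
    by_cases hj : s ≤ j
    · rw [if_pos (by omega : s + 1 ≤ j + 1), if_pos hj, mul_zero, sub_zero]
    · rw [if_neg (by omega : ¬ s + 1 ≤ j + 1), if_neg hj,
        inv_mul_cancel_left₀ (pow_ne_zero _ hpC), sub_self, mul_zero]
  rw [tsum_congr hterm]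
  have hnorm : ‖((q : ℝ) : ℂ)‖ < 1 := by
    rw [Complex.norm_real, Real.norm_eq_abs, abs_of_pos hq0]; exact hq1
  have hgeo : Summable fun j : ℕ => ((q : ℂ)) ^ j := summable_geometric_of_norm_lt_one hnorm
  have hsummand : Summable fun j : ℕ => (((1 - q) * q ^ j : ℝ) : ℂ) * eigF p s k k' x := by
    apply Summable.congr ((hgeo.mul_left (((1 - q : ℝ) : ℂ))).mul_right (eigF p s k k' x))
    intro j; push_cast; ring
  have hg : Summable (fun j : ℕ =>
      if s ≤ j then (((1 - q) * q ^ j : ℝ) : ℂ) * eigF p s k k' x else 0) := by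
    have heq : (fun j : ℕ =>
        if s ≤ j then (((1 - q) * q ^ j : ℝ) : ℂ) * eigF p s k k' x else 0)
        = fun j => Set.indicator {j : ℕ | s ≤ j}
            (fun j => (((1 - q) * q ^ j : ℝ) : ℂ) * eigF p s k k' x) j := by
      funext j; rw [Set.indicator_apply]; simp [Set.mem_setOf_eq]
    rw [heq]
    exact hsummand.indicator _
  rw [← Summable.sum_add_tsum_nat_add s hg,
    Finset.sum_eq_zero (fun i hi => if_neg (by simp at hi; omega)), zero_add]
  have hshift : ∀ i : ℕ,
      (if s ≤ i + s then (((1 - q) * q ^ (i + s) : ℝ) : ℂ) * eigF p s k k' x else 0)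
      = (((1 - q : ℝ) : ℂ) * ((q : ℝ) : ℂ) ^ s * eigF p s k k' x) * ((q : ℝ) : ℂ) ^ i := by
    intro i; rw [if_pos (by omega)]; push_cast; ring
  rw [tsum_congr hshift, tsum_mul_left, tsum_geometric_of_norm_lt_one hnorm]
  have h1q : (1 : ℂ) - (q : ℂ) ≠ 0 := by
    rw [sub_ne_zero]
    exact_mod_cast (ne_of_lt hq1).symm
  push_cast
  field_simp

theorem stmt_4 (p : ℕ) (hp : 2 ≤ p) (α : ℝ) (hα : 0 < α)
    (D : lp (fun _ : ℕ => ℂ) 2 →L[ℂ] lp (fun _ : ℕ => ℂ) 2)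
    (hDsa : IsSelfAdjoint D) (hD : IsDyson p α D)
    -- `I = [k p^r, (k+1) p^r)` is a p-adic interval of rank `r ≥ 1`,
    -- `I' = [k' p^(r-1), (k'+1) p^(r-1)) ⊆ I` a p-adic interval of rank `r - 1`
    (r k k' : ℕ) (hr : 1 ≤ r)
    (hsub : Finset.Ico (k' * p ^ (r - 1)) ((k' + 1) * p ^ (r - 1)) ⊆
      Finset.Ico (k * p ^ r) ((k + 1) * p ^ r)) :
    -- `f = p^(-(r-1)) 1_{I'} - p^(-r) 1_I` belongs to `ℓ²`,
    Memℓp (fun x : ℕ =>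
      ((p : ℂ) ^ (r - 1))⁻¹ *
          (if x ∈ Finset.Ico (k' * p ^ (r - 1)) ((k' + 1) * p ^ (r - 1)) then 1 else 0) -
        ((p : ℂ) ^ r)⁻¹ * (if x ∈ Finset.Ico (k * p ^ r) ((k + 1) * p ^ r) then 1 else 0)) 2 ∧
    -- is nonzero, and is an eigenfunction of `D^α` with eigenvalue `κ^(r-1)`
    (∃ f : lp (fun _ : ℕ => ℂ) 2,
      (∀ x : ℕ, f x =
        ((p : ℂ) ^ (r - 1))⁻¹ *
            (if x ∈ Finset.Ico (k' * p ^ (r - 1)) ((k' + 1) * p ^ (r - 1)) then 1 else 0) -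
          ((p : ℂ) ^ r)⁻¹ * (if x ∈ Finset.Ico (k * p ^ r) ((k + 1) * p ^ r) then 1 else 0)) ∧
      f ≠ 0 ∧ D f = ((kappa p α ^ (r - 1) : ℝ) : ℂ) • f) := by
  obtain ⟨s, rfl⟩ : ∃ s, r = s + 1 := ⟨r - 1, by omega⟩
  simp only [Nat.add_sub_cancel] at hsub ⊢
  have hp0 : 0 < p := by omega
  have hpC : (p : ℂ) ≠ 0 := Nat.cast_ne_zero.mpr (by omega)
  have hmem : Memℓp (eigF p s k k') 2 := by
    apply memℓp_gen
    apply summable_of_ne_finset_zero (s := Finset.Ico (k * p ^ (s + 1)) ((k + 1) * p ^ (s + 1)))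
    intro x hx
    have hx' : x ∉ Finset.Ico (k' * p ^ s) ((k' + 1) * p ^ s) := fun h => hx (hsub h)
    simp only [eigF, if_neg hx, if_neg hx', mul_zero, sub_zero, norm_zero]
    rw [Real.zero_rpow (by norm_num)]
  refine ⟨hmem, ⟨⟨_, hmem⟩, fun x => rfl, ?_, ?_⟩⟩
  · intro h0
    have h1 : (⟨_, hmem⟩ : lp (fun _ : ℕ => ℂ) 2) (k' * p ^ s) = 0 := by rw [h0]; rfl
    have hx' : k' * p ^ s ∈ Finset.Ico (k' * p ^ s) ((k' + 1) * p ^ s) := by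
      rw [Finset.mem_Ico]
      have := pow_pos hp0 s
      exact ⟨le_rfl, by rw [add_mul, one_mul]; omega⟩
    have hx : k' * p ^ s ∈ Finset.Ico (k * p ^ (s + 1)) ((k + 1) * p ^ (s + 1)) := hsub hx'
    have h2 : eigF p s k k' (k' * p ^ s) = 0 := h1
    rw [eigF] at h2
    simp only [if_pos hx', if_pos hx, mul_one, sub_eq_zero] at h2
    have h3 : ((p : ℂ) ^ s) = (p : ℂ) ^ (s + 1) := inv_injective h2
    have h4 : (p : ℕ) ^ s ≠ p ^ (s + 1) :=
      Nat.ne_of_lt (Nat.pow_lt_pow_right (by omega) (by omega))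
    exact h4 (by exact_mod_cast h3)
  · apply lp.ext
    funext x
    rw [lp.coeFn_smul, Pi.smul_apply, smul_eq_mul]
    exact eig_ptwise hp hα hsub hD _ rfl x
end

section
/- For every a ∈ ℕ and every λ ∈ ℂ not in the spectrum of D^α (i.e. λ ∉ {0} ∪ {κ^(k−1) : k ≥ 1}), the diagonal resolvent kernel of D^α is given by the convergent series R(λ, a, a) = (p − 1) · Σ_{k=1}^∞ p^(−k) / (κ^(k−1) − λ). In particular R(λ, a, a) does not depend on a. -/
lemma block_card (p r x : ℕ) : (block p r x).card = p ^ r := by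
  simp [block, Nat.card_Ico, Nat.succ_mul]

lemma mem_block {p : ℕ} (hp : 0 < p) {r x y : ℕ} :
    y ∈ block p r x ↔ y / p ^ r = x / p ^ r := by
  have hq : 0 < p ^ r := Nat.pow_pos hp
  rw [block, Finset.mem_Ico]
  constructor
  · rintro ⟨h1, h2⟩
    have h3 : x / p ^ r ≤ y / p ^ r := (Nat.le_div_iff_mul_le hq).2 h1
    have h4 : y / p ^ r < x / p ^ r + 1 := (Nat.div_lt_iff_lt_mul hq).2 h2
    omega
  · rintro h
    refine ⟨?_, ?_⟩
    · rw [← h]; exact Nat.div_mul_le_self y _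
    · rw [← h, Nat.succ_mul]
      exact Nat.lt_div_mul_add hq |>.trans_le (by omega)

lemma block_mono {p : ℕ} (hp : 0 < p) {r s x y : ℕ} (hrs : r ≤ s)
    (h : y ∈ block p r x) : y ∈ block p s x := by
  rw [mem_block hp] at h ⊢
  have : p ^ s = p ^ r * p ^ (s - r) := by rw [← pow_add]; congr 1; omega
  rw [this, ← Nat.div_div_eq_div_mul, ← Nat.div_div_eq_div_mul, h]

lemma block_symm {p : ℕ} (hp : 0 < p) {r x y : ℕ} (h : y ∈ block p r x) :
    x ∈ block p r y := by
  rw [mem_block hp] at h ⊢; omega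

lemma block_congr {p : ℕ} (hp : 0 < p) {r x w : ℕ} (h : x ∈ block p r w) :
    block p r x = block p r w := by
  rw [mem_block hp] at h
  unfold block; rw [h]

lemma block_inter_le {p : ℕ} (hp : 0 < p) {r j x a : ℕ} (hrj : r ≤ j) :
    ((block p r x) ∩ (block p j a)).card = if x ∈ block p j a then p ^ r else 0 := by
  by_cases hx : x ∈ block p j a
  · rw [if_pos hx, Finset.inter_eq_left.2, block_card]
    intro y hy
    have := block_mono hp hrj hy
    rw [mem_block hp] at this hx ⊢
    omega
  · rw [if_neg hx, Finset.card_eq_zero, Finset.eq_empty_iff_forall_notMem]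
    intro y hy
    rw [Finset.mem_inter] at hy
    obtain ⟨hy1, hy2⟩ := hy
    have h1 := block_mono hp hrj hy1
    rw [mem_block hp] at h1 hy2
    exact hx (by rw [mem_block hp]; omega)

lemma block_inter_ge {p : ℕ} (hp : 0 < p) {r j x a : ℕ} (hjr : j ≤ r) :
    ((block p r x) ∩ (block p j a)).card = if x ∈ block p r a then p ^ j else 0 := by
  by_cases hx : x ∈ block p r a
  · rw [if_pos hx, block_congr hp hx, Finset.inter_eq_right.2, block_card]
    intro y hy
    exact block_mono hp hjr hy
  · rw [if_neg hx, Finset.card_eq_zero, Finset.eq_empty_iff_forall_notMem]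
    intro y hy
    rw [Finset.mem_inter] at hy
    obtain ⟨hy1, hy2⟩ := hy
    have h1 := block_mono hp hjr hy2
    rw [mem_block hp] at h1 hy1
    exact hx (by rw [mem_block hp]; omega)

noncomputable def chi (p j a : ℕ) : lp (fun _ : ℕ => ℂ) 2 :=
  ∑ y ∈ block p j a, lp.single 2 y 1

lemma single_apply' (y x : ℕ) (c : ℂ) :
    (lp.single 2 y c : lp (fun _ : ℕ => ℂ) 2) x = if x = y then c else 0 := by
  rw [lp.single_apply]
  split_ifs with h
  · subst h; simp
  · simp [h]

lemma chi_apply (p j a x : ℕ) :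
    chi p j a x = if x ∈ block p j a then 1 else 0 := by
  have : (chi p j a : ℕ → ℂ) x = ∑ y ∈ block p j a, (lp.single 2 y (1:ℂ)) x := by
    rw [chi, lp.coeFn_sum, Finset.sum_apply]
  rw [this, Finset.sum_congr rfl (fun y _ => single_apply' y x 1), Finset.sum_ite_eq]

lemma sum_block_chi {p : ℕ} (hp : 0 < p) (r j x a : ℕ) :
    ∑ y ∈ block p r x, chi p j a y =
      (((block p r x) ∩ (block p j a)).card : ℂ) := by
  simp only [chi_apply]
  rw [Finset.sum_ite_mem]
  simp

open scoped ComplexOrder in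
lemma inner_chi_self (p j a : ℕ) :
    (inner ℂ (chi p j a) (chi p j a) : ℂ) = ((p : ℂ) ^ j) := by
  nth_rewrite 1 [chi]
  rw [sum_inner]
  have : ∀ y ∈ block p j a,
      (inner ℂ (lp.single 2 y (1:ℂ)) (chi p j a) : ℂ) = 1 := by
    intro y hy
    rw [lp.inner_single_left]
    simp [chi_apply, hy]
  rw [Finset.sum_congr rfl this]
  simp [block_card]

lemma norm_chi (p j a : ℕ) (hp : 0 < p) :
    ‖chi p j a‖ = Real.sqrt p ^ j := by
  have h2 : ‖chi p j a‖ ^ 2 = (p : ℝ) ^ j := by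
    rw [norm_sq_eq_re_inner (𝕜 := ℂ), inner_chi_self]
    norm_cast
  have h3 : (Real.sqrt p ^ j) ^ 2 = (p : ℝ) ^ j := by
    rw [← pow_mul, mul_comm, pow_mul, Real.sq_sqrt (by positivity)]
  nlinarith [norm_nonneg (chi p j a), Real.sqrt_nonneg (p : ℝ),
    pow_nonneg (Real.sqrt_nonneg (p : ℝ)) j, sq_nonneg (‖chi p j a‖ - Real.sqrt p ^ j)]

noncomputable def Pa (p j a : ℕ) : lp (fun _ : ℕ => ℂ) 2 :=
  ((p : ℂ) ^ j)⁻¹ • chi p j a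

lemma Pa_apply (p j a x : ℕ) :
    Pa p j a x = if x ∈ block p j a then ((p : ℂ) ^ j)⁻¹ else 0 := by
  have : (Pa p j a : ℕ → ℂ) x = ((p : ℂ) ^ j)⁻¹ * chi p j a x := by
    rw [Pa, lp.coeFn_smul]; rfl
  rw [this, chi_apply]
  split_ifs <;> simp

lemma norm_Pa {p : ℕ} (hp : 0 < p) (j a : ℕ) :
    ‖Pa p j a‖ = ((Real.sqrt p)⁻¹) ^ j := by
  have hs : (0:ℝ) < Real.sqrt p := Real.sqrt_pos.2 (by positivity)
  rw [Pa, norm_smul, norm_chi p j a hp, norm_inv, norm_pow]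
  have : ‖((p:ℕ) : ℂ)‖ = Real.sqrt p * Real.sqrt p := by
    rw [Complex.norm_natCast]
    exact (Real.mul_self_sqrt (by positivity)).symm
  rw [this]
  rw [mul_pow]
  field_simp
  rw [one_div, ← mul_pow, mul_inv_cancel₀ hs.ne', one_pow]

lemma pa_sum {p : ℕ} (hp : 0 < p) (r j x a : ℕ) :
    ∑ y ∈ block p r x, Pa p j a y
      = ((p : ℂ) ^ j)⁻¹ * (((block p r x) ∩ (block p j a)).card : ℂ) := by
  rw [← sum_block_chi hp, Finset.mul_sum]
  refine Finset.sum_congr rfl fun y _ => ?_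
  rw [Pa, lp.coeFn_smul]; rfl

lemma avg_Pa {p : ℕ} (hp : 0 < p) (r j x a : ℕ) :
    ((p : ℂ) ^ r)⁻¹ * ∑ y ∈ block p r x, Pa p j a y = Pa p (max r j) a x := by
  have hpc : ((p:ℕ):ℂ) ≠ 0 := Nat.cast_ne_zero.2 hp.ne'
  have hpr : ((p:ℂ) ^ r) ≠ 0 := pow_ne_zero _ hpc
  have hpj : ((p:ℂ) ^ j) ≠ 0 := pow_ne_zero _ hpc
  rw [pa_sum hp]
  rcases le_total r j with h | h
  · rw [block_inter_le hp h, max_eq_right h, Pa_apply]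
    split_ifs <;> field_simp <;> simp
  · rw [block_inter_ge hp h, max_eq_left h, Pa_apply]
    split_ifs <;> field_simp <;> simp

lemma hasSum_coeff {κ : ℝ} (h0 : 0 ≤ κ) (h1 : κ < 1) (j : ℕ) :
    HasSum (fun r : ℕ => if j ≤ r then (1 - κ) * κ ^ r else 0) (κ ^ j) := by
  have hg : HasSum (fun n : ℕ => (1 - κ) * κ ^ (n + j)) (κ ^ j) := by
    have h := (hasSum_geometric_of_lt_one h0 h1).mul_left ((1 - κ) * κ ^ j)
    have he : (fun n : ℕ => (1 - κ) * κ ^ j * κ ^ n) = fun n : ℕ => (1 - κ) * κ ^ (n + j) := by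
      funext n; rw [pow_add]; ring
    have hne : (1:ℝ) - κ ≠ 0 := by linarith
    have hv : (1 - κ) * κ ^ j * (1 - κ)⁻¹ = κ ^ j := by
      field_simp
    rwa [he, hv] at h
  have he2 : (fun n : ℕ => if j ≤ n + j then (1 - κ) * κ ^ (n + j) else 0)
      = fun n : ℕ => (1 - κ) * κ ^ (n + j) := by
    funext n; rw [if_pos (by omega)]
  have hz : ∑ i ∈ Finset.range j, (if j ≤ i then (1 - κ) * κ ^ i else 0) = 0 := by
    apply Finset.sum_eq_zero
    intro i hi
    rw [Finset.mem_range] at hi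
    rw [if_neg (by omega)]
  have key : HasSum (fun r : ℕ => if j ≤ r then (1 - κ) * κ ^ r else 0)
      (κ ^ j + ∑ i ∈ Finset.range j, (if j ≤ i then (1 - κ) * κ ^ i else 0)) :=
    (hasSum_nat_add_iff j).1 (by rw [he2]; exact hg)
  rwa [hz, add_zero] at key

lemma kappa_pos {p : ℕ} (hp : 0 < p) (α : ℝ) : 0 < kappa p α :=
  Real.rpow_pos_of_pos (by exact_mod_cast hp) _

lemma kappa_lt_one {p : ℕ} (hp : 2 ≤ p) {α : ℝ} (hα : 0 < α) : kappa p α < 1 :=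
  Real.rpow_lt_one_of_one_lt_of_neg (by exact_mod_cast hp.trans_lt' one_lt_two) (by linarith)

lemma D_eigen {p : ℕ} (hp : 2 ≤ p) {α : ℝ} (hα : 0 < α)
    {D : lp (fun _ : ℕ => ℂ) 2 →L[ℂ] lp (fun _ : ℕ => ℂ) 2}
    (hD : IsDyson p α D) (j a : ℕ) :
    D (Pa p j a - Pa p (j + 1) a)
      = (((kappa p α ^ j : ℝ)) : ℂ) • (Pa p j a - Pa p (j + 1) a) := by
  set κ := kappa p α with hκ
  have hp0 : 0 < p := by omega
  have hκ0 : 0 ≤ κ := (kappa_pos hp0 α).le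
  have hκ1 : κ < 1 := kappa_lt_one hp hα
  set Q : lp (fun _ : ℕ => ℂ) 2 := Pa p j a - Pa p (j + 1) a with hQ
  apply lp.ext; funext x
  rw [hD]
  have hsub : ∀ y, Q y = Pa p j a y - Pa p (j + 1) a y := fun y => by
    rw [hQ, lp.coeFn_sub]; rfl
  have havg : ∀ r : ℕ, ((p : ℂ) ^ (r + 1))⁻¹ * ∑ y ∈ block p (r + 1) x, Q y
      = Pa p (max (r + 1) j) a x - Pa p (max (r + 1) (j + 1)) a x := by
    intro r
    simp only [hsub, Finset.sum_sub_distrib, mul_sub, avg_Pa hp0]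
  have hterm : ∀ r : ℕ, (((1 - κ) * κ ^ r : ℝ) : ℂ) *
      (Q x - ((p : ℂ) ^ (r + 1))⁻¹ * ∑ y ∈ block p (r + 1) x, Q y)
      = (((if j ≤ r then (1 - κ) * κ ^ r else 0 : ℝ)) : ℂ) * Q x := by
    intro r
    rw [havg]
    by_cases hr : j ≤ r
    · rw [if_pos hr]
      have h1 : max (r + 1) j = r + 1 := by omega
      have h2 : max (r + 1) (j + 1) = r + 1 := by omega
      rw [h1, h2, sub_self, sub_zero]
    · rw [if_neg hr]
      have h1 : max (r + 1) j = j := by omega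
      have h2 : max (r + 1) (j + 1) = j + 1 := by omega
      rw [h1, h2, ← hsub, sub_self, mul_zero]
      simp
  have hc : HasSum (fun r : ℕ => (((if j ≤ r then (1 - κ) * κ ^ r else 0 : ℝ)) : ℂ) * Q x)
      ((((κ ^ j : ℝ)) : ℂ) * Q x) := by
    have h1 := (hasSum_coeff hκ0 hκ1 j).mapL Complex.ofRealCLM
    exact h1.mul_right (Q x)
  have hrhs : ((((κ ^ j : ℝ)) : ℂ) • Q) x = (((κ ^ j : ℝ)) : ℂ) * Q x := by
    rw [lp.coeFn_smul]; rfl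
  rw [hrhs, tsum_congr hterm]
  exact hc.tsum_eq

lemma Pa_apply_self {p : ℕ} (hp : 0 < p) (j a : ℕ) :
    Pa p j a a = ((p : ℂ) ^ j)⁻¹ := by
  rw [Pa_apply, if_pos ((mem_block hp).2 rfl)]

lemma Pa_zero (p a : ℕ) : Pa p 0 a = lp.single 2 a 1 := by
  have hb : block p 0 a = {a} := by
    simp [block]
  rw [Pa, pow_zero, inv_one, one_smul, chi, hb, Finset.sum_singleton]

noncomputable def evalCLM (a : ℕ) : lp (fun _ : ℕ => ℂ) 2 →L[ℂ] ℂ :=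
  LinearMap.mkContinuous
    { toFun := fun f => f a
      map_add' := fun f g => by
        have := congrFun (lp.coeFn_add f g) a; simpa using this
      map_smul' := fun c f => by
        have := congrFun (lp.coeFn_smul c f) a; simpa using this }
    1 (fun f => by
      rw [one_mul]
      exact lp.norm_apply_le_norm (by norm_num) f a)

lemma evalCLM_apply (a : ℕ) (f : lp (fun _ : ℕ => ℂ) 2) : evalCLM a f = f a := rfl

set_option maxHeartbeats 1000000 in
theorem stmt_6 (p : ℕ) (hp : 2 ≤ p) (α : ℝ) (hα : 0 < α)
    (D : lp (fun _ : ℕ => ℂ) 2 →L[ℂ] lp (fun _ : ℕ => ℂ) 2)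
    (hDsa : IsSelfAdjoint D) (hD : IsDyson p α D)
    (a : ℕ) (z : ℂ) (hz : z ∉ spectrum ℂ D) :
    -- `R(z, a, a) = ((D - z I)⁻¹ δ_a)(a) = (p - 1) Σ_{k ≥ 1} p^(-k) / (κ^(k-1) - z)`,
    -- as a convergent series (in particular independent of `a`)
    HasSum (fun k : ℕ => ((p : ℂ) - 1) *
        (((p : ℂ) ^ (k + 1))⁻¹ / (((kappa p α ^ k : ℝ) : ℂ) - z)))
      (Ring.inverse (D - z • 1) (lp.single 2 a 1) a) := by
  classical
  set κ := kappa p α with hκdef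
  have hp0 : 0 < p := by omega
  have hκ0 : 0 ≤ κ := (kappa_pos hp0 α).le
  have hκ1 : κ < 1 := kappa_lt_one hp hα
  set Q : ℕ → lp (fun _ : ℕ => ℂ) 2 := fun j => Pa p j a - Pa p (j + 1) a with hQdef
  have heig : ∀ j, D (Q j) = (((κ ^ j : ℝ)) : ℂ) • Q j := fun j => D_eigen hp hα hD j a
  -- Q j is nonzero
  have hQapply : ∀ j, Q j a = ((p : ℂ) ^ j)⁻¹ - ((p : ℂ) ^ (j + 1))⁻¹ := by
    intro j
    have : Q j a = Pa p j a a - Pa p (j + 1) a a := by rw [hQdef, lp.coeFn_sub]; rfl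
    rw [this, Pa_apply_self hp0, Pa_apply_self hp0]
  have hppow : ∀ j : ℕ, ((p : ℂ) ^ j) ≠ 0 :=
    fun j => pow_ne_zero _ (Nat.cast_ne_zero.2 hp0.ne')
  have hQne : ∀ j, Q j ≠ 0 := by
    intro j h0
    have h1 : Q j a = 0 := by rw [h0]; rfl
    rw [hQapply j, sub_eq_zero] at h1
    have h2 : ((p : ℂ) ^ j) = ((p : ℂ) ^ (j + 1)) := by
      exact inv_injective h1
    have h3 : (p : ℕ) ^ j = (p : ℕ) ^ (j + 1) := by exact_mod_cast h2
    have := Nat.pow_lt_pow_succ (by omega : 1 < p) (n := j)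
    omega
  -- eigenvalues belong to the spectrum
  have hmem : ∀ j, (((κ ^ j : ℝ)) : ℂ) ∈ spectrum ℂ D := by
    intro j
    by_contra hmemn
    rw [spectrum.notMem_iff] at hmemn
    obtain ⟨u, hu⟩ := hmemn
    have h0 : (algebraMap ℂ _ (((κ ^ j : ℝ)) : ℂ) - D) (Q j) = 0 := by
      rw [ContinuousLinearMap.sub_apply, Algebra.algebraMap_eq_smul_one,
        ContinuousLinearMap.smul_apply, ContinuousLinearMap.one_apply, heig j, sub_self]
    have : Q j = 0 := by
      have h1 : ((u⁻¹ : (lp (fun _ : ℕ => ℂ) 2 →L[ℂ] lp (fun _ : ℕ => ℂ) 2)ˣ) :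
            lp (fun _ : ℕ => ℂ) 2 →L[ℂ] lp (fun _ : ℕ => ℂ) 2)
          ((u : lp (fun _ : ℕ => ℂ) 2 →L[ℂ] lp (fun _ : ℕ => ℂ) 2) (Q j)) = Q j := by
        rw [← ContinuousLinearMap.mul_apply, Units.inv_mul]
        rfl
      rw [hu, h0, map_zero] at h1
      exact h1.symm
    exact hQne j this
  have hzne : ∀ j, (((κ ^ j : ℝ)) : ℂ) - z ≠ 0 := by
    intro j h0
    exact hz (by rwa [sub_eq_zero] at h0 ▸ hmem j)
  -- distance to spectrum
  set d := Metric.infDist z (spectrum ℂ D) with hddef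
  have hd : 0 < d := by
    rw [hddef]
    exact ((spectrum.isClosed D).notMem_iff_infDist_pos ⟨_, hmem 0⟩).1 hz
  have hdist : ∀ j, d ≤ ‖(((κ ^ j : ℝ)) : ℂ) - z‖ := by
    intro j
    have h1 := Metric.infDist_le_dist_of_mem (x := z) (hmem j)
    rwa [dist_eq_norm, norm_sub_rev] at h1
  set c : ℕ → ℂ := fun j => ((((κ ^ j : ℝ)) : ℂ) - z)⁻¹ with hcdef
  have hcnorm : ∀ j, ‖c j‖ ≤ d⁻¹ := by
    intro j
    rw [hcdef, norm_inv]
    exact inv_anti₀ hd (hdist j)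
  -- geometric bounds
  set s : ℝ := (Real.sqrt p)⁻¹ with hsdef
  have hsqrt1 : 1 < Real.sqrt p := by
    have h2 : (1:ℝ) < (p:ℝ) := by exact_mod_cast hp.trans_lt' one_lt_two
    nlinarith [Real.sq_sqrt (by positivity : (0:ℝ) ≤ (p:ℝ)), Real.sqrt_nonneg (p:ℝ)]
  have hs0 : 0 ≤ s := by rw [hsdef]; positivity
  have hs1 : s < 1 := by
    rw [hsdef, inv_lt_one_iff₀]; right; exact hsqrt1
  have hQnorm : ∀ j, ‖Q j‖ ≤ 2 * s ^ j := by
    intro j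
    have h1 : ‖Q j‖ ≤ ‖Pa p j a‖ + ‖Pa p (j + 1) a‖ := norm_sub_le _ _
    rw [norm_Pa hp0, norm_Pa hp0] at h1
    have h2 : s ^ (j + 1) ≤ s ^ j := by
      rw [pow_succ]
      nlinarith [pow_nonneg hs0 j]
    rw [← hsdef] at h1
    linarith
  have hgeo : Summable (fun j : ℕ => (2 * d⁻¹) * s ^ j) :=
    (summable_geometric_of_lt_one hs0 hs1).mul_left _
  have hfnorm : ∀ j, ‖c j • Q j‖ ≤ (2 * d⁻¹) * s ^ j := by
    intro j
    rw [norm_smul]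
    calc ‖c j‖ * ‖Q j‖ ≤ d⁻¹ * (2 * s ^ j) :=
          mul_le_mul (hcnorm j) (hQnorm j) (norm_nonneg _) (by positivity)
      _ = (2 * d⁻¹) * s ^ j := by ring
  have hsum : Summable (fun j => c j • Q j) :=
    Summable.of_norm_bounded hgeo hfnorm
  set u : lp (fun _ : ℕ => ℂ) 2 := ∑' j, c j • Q j with hudef
  have hu : HasSum (fun j => c j • Q j) u := hsum.hasSum
  -- telescoping: HasSum Q δ_a
  have hQsummable : Summable Q :=
    Summable.of_norm_bounded ((summable_geometric_of_lt_one hs0 hs1).mul_left 2) hQnorm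
  have hQhs : HasSum Q (lp.single 2 a 1) := by
    obtain ⟨S, hS⟩ := hQsummable
    have ht := hS.tendsto_sum_nat
    have htel : ∀ n, ∑ j ∈ Finset.range n, Q j = Pa p 0 a - Pa p n a := by
      intro n
      rw [hQdef]
      exact Finset.sum_range_sub' (fun j => Pa p j a) n
    have hPn : Filter.Tendsto (fun n => Pa p n a) Filter.atTop (nhds 0) := by
      rw [tendsto_zero_iff_norm_tendsto_zero]
      have : (fun n : ℕ => ‖Pa p n a‖) = fun n : ℕ => s ^ n := by
        funext n; rw [norm_Pa hp0, hsdef]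
      rw [this]
      exact tendsto_pow_atTop_nhds_zero_of_lt_one hs0 hs1
    have hlim : Filter.Tendsto (fun n => Pa p 0 a - Pa p n a) Filter.atTop
        (nhds (Pa p 0 a - 0)) := tendsto_const_nhds.sub hPn
    have hSeq : S = Pa p 0 a - 0 := by
      refine tendsto_nhds_unique ?_ hlim
      rw [show (fun n => Pa p 0 a - Pa p n a) = fun n => ∑ j ∈ Finset.range n, Q j from
        funext fun n => (htel n).symm]
      exact ht
    rw [hSeq, sub_zero, Pa_zero] at hS
    exact hS
  -- (D - z • 1) u = δ_a
  have himg : (D - z • 1) u = lp.single 2 a 1 := by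
    have h1 : HasSum (fun j => (D - z • 1) (c j • Q j)) ((D - z • 1) u) := hu.mapL _
    have h2 : ∀ j, (D - z • 1) (c j • Q j) = Q j := by
      intro j
      rw [map_smul]
      have h3 : (D - z • 1) (Q j) = ((((κ ^ j : ℝ)) : ℂ) - z) • Q j := by
        rw [ContinuousLinearMap.sub_apply, ContinuousLinearMap.smul_apply,
          ContinuousLinearMap.one_apply, heig j, sub_smul]
      rw [h3, smul_smul, hcdef, inv_mul_cancel₀ (hzne j), one_smul]
    rw [show (fun j => (D - z • 1) (c j • Q j)) = Q from funext h2] at h1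
    exact (h1.unique hQhs)
  -- invertibility
  have hunit : IsUnit (D - z • 1) := by
    have h1 := spectrum.notMem_iff.1 hz
    rw [Algebra.algebraMap_eq_smul_one] at h1
    rw [show D - z • 1 = -(z • 1 - D) from (neg_sub _ _).symm]
    exact h1.neg
  have hres : Ring.inverse (D - z • 1) (lp.single 2 a 1) = u := by
    rw [← himg, ← ContinuousLinearMap.mul_apply, Ring.inverse_mul_cancel _ hunit,
      ContinuousLinearMap.one_apply]
  -- evaluate at a
  have heval : HasSum (fun j => evalCLM a (c j • Q j)) (evalCLM a u) := hu.mapL _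
  have hterm : ∀ j : ℕ, evalCLM a (c j • Q j)
      = ((p : ℂ) - 1) * (((p : ℂ) ^ (j + 1))⁻¹ / ((((κ ^ j : ℝ)) : ℂ) - z)) := by
    intro j
    rw [evalCLM_apply]
    have h1 : (c j • Q j) a = c j * Q j a := by
      have := congrFun (lp.coeFn_smul (c j) (Q j)) a
      simpa using this
    rw [h1, hQapply j]
    rw [div_eq_mul_inv]
    simp only [hcdef]
    have h2 : ((p : ℂ) ^ j)⁻¹ - ((p : ℂ) ^ (j + 1))⁻¹
        = ((p : ℂ) - 1) * ((p : ℂ) ^ (j + 1))⁻¹ := by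
      have hpj := hppow j
      have hpc : ((p : ℕ) : ℂ) ≠ 0 := Nat.cast_ne_zero.2 hp0.ne'
      rw [pow_succ]
      field_simp
    rw [h2]
    ring
  rw [show (fun j => evalCLM a (c j • Q j)) = _ from funext hterm] at heval
  have hfin : Ring.inverse (D - z • 1) (lp.single 2 a 1) a = evalCLM a u := by
    have h9 := congrArg (fun v : lp (fun _ : ℕ => ℂ) 2 => (v : ℕ → ℂ) a) hres
    simpa [evalCLM_apply] using h9
  rw [hfin]
  exact heval
end

section
/- Let 𝓗 be a complex Hilbert space, let A and B be bounded self-adjoint operators on 𝓗, and suppose the range of B has finite dimension at most N. Let (a, b) ⊆ ℝ be an open interval such that no λ ∈ (a, b) belongs to the spectrum of A. Then the set {λ ∈ ℝ : a < λ < b and λ belongs to the spectrum of A + B} is finite and has at most N elements. -/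
open scoped InnerProductSpace

lemma aux_fredholm {𝓗 : Type*} [NormedAddCommGroup 𝓗] [NormedSpace ℂ 𝓗] [CompleteSpace 𝓗]
    (K : 𝓗 →L[ℂ] 𝓗) (hK : FiniteDimensional ℂ (LinearMap.range (K : 𝓗 →ₗ[ℂ] 𝓗)))
    (h : ¬ IsUnit (1 - K)) : ∃ x : 𝓗, x ≠ 0 ∧ K x = x := by
  by_contra hc
  push_neg at hc
  have hinj : Function.Injective ((1 - K : 𝓗 →L[ℂ] 𝓗)) := by
    intro x y hxy
    have hxy' : x - K x = y - K y := by
      simpa [ContinuousLinearMap.sub_apply] using hxy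
    have h0 : K (x - y) = x - y := by
      have := sub_eq_sub_iff_sub_eq_sub.mp hxy'
      simpa [map_sub] using this.symm
    by_contra hne
    exact hc (x - y) (sub_ne_zero.mpr hne) h0
  set V := LinearMap.range (K : 𝓗 →ₗ[ℂ] 𝓗) with hV
  have hKV : ∀ v : 𝓗, K v ∈ V := fun v => LinearMap.mem_range_self _ v
  let S : V →ₗ[ℂ] V := (K : 𝓗 →ₗ[ℂ] 𝓗).restrict (fun x _ => hKV x)
  have hScoe : ∀ v : V, (S v : 𝓗) = K v := fun v => rfl
  haveI := hK
  have hTinj : Function.Injective (LinearMap.id (R := ℂ) (M := V) - S) := by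
    intro v w hvw
    have hvw' : (v : 𝓗) - K v = (w : 𝓗) - K w := by
      have := congrArg (Subtype.val) hvw
      simpa [LinearMap.sub_apply, hScoe] using this
    have : (1 - K : 𝓗 →L[ℂ] 𝓗) v = (1 - K : 𝓗 →L[ℂ] 𝓗) w := by
      simpa [ContinuousLinearMap.sub_apply] using hvw'
    exact Subtype.ext (hinj this)
  have hTsurj := LinearMap.injective_iff_surjective.mp hTinj
  have hsurj : Function.Surjective ((1 - K : 𝓗 →L[ℂ] 𝓗)) := by
    intro y
    obtain ⟨v, hv⟩ := hTsurj ⟨K y, hKV y⟩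
    have hv' : (v : 𝓗) - K v = K y := by
      have := congrArg (Subtype.val) hv
      simpa [LinearMap.sub_apply, hScoe] using this
    refine ⟨y + v, ?_⟩
    have : (1 - K : 𝓗 →L[ℂ] 𝓗) (y + ↑v) = y + ((v : 𝓗) - K v) - K y := by
      simp [ContinuousLinearMap.sub_apply, map_add]
      abel
    rw [this, hv']
    abel
  exact h (ContinuousLinearMap.isUnit_iff_bijective.mpr ⟨hinj, hsurj⟩)

lemma aux_eigen {𝓗 : Type*} [NormedAddCommGroup 𝓗] [NormedSpace ℂ 𝓗] [CompleteSpace 𝓗]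
    (A B : 𝓗 →L[ℂ] 𝓗)
    (hBfin : FiniteDimensional ℂ (LinearMap.range (B : 𝓗 →ₗ[ℂ] 𝓗)))
    (lam : ℂ) (hU : IsUnit (algebraMap ℂ (𝓗 →L[ℂ] 𝓗) lam - A))
    (hs : lam ∈ spectrum ℂ (A + B)) :
    ∃ x : 𝓗, x ≠ 0 ∧ A x + B x = lam • x := by
  obtain ⟨u, hu⟩ := hU
  set K : 𝓗 →L[ℂ] 𝓗 := ↑u⁻¹ * B with hKdef
  have hfact : algebraMap ℂ (𝓗 →L[ℂ] 𝓗) lam - (A + B) = ↑u * (1 - K) := by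
    rw [mul_sub, mul_one, hKdef, ← mul_assoc, u.mul_inv, one_mul, hu]
    abel
  have hnotunit : ¬ IsUnit (1 - K) := by
    intro h1
    exact spectrum.mem_iff.mp hs (hfact ▸ u.isUnit.mul h1)
  have hKfin : FiniteDimensional ℂ (LinearMap.range (K : 𝓗 →ₗ[ℂ] 𝓗)) := by
    have : (K : 𝓗 →ₗ[ℂ] 𝓗) = ((↑u⁻¹ : 𝓗 →L[ℂ] 𝓗) : 𝓗 →ₗ[ℂ] 𝓗).comp (B : 𝓗 →ₗ[ℂ] 𝓗) := rfl
    rw [this, LinearMap.range_comp]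
    exact Module.Finite.map _ _
  obtain ⟨x, hx0, hKx⟩ := aux_fredholm K hKfin hnotunit
  refine ⟨x, hx0, ?_⟩
  have h2 : (algebraMap ℂ (𝓗 →L[ℂ] 𝓗) lam - (A + B)) x = 0 := by
    rw [hfact]
    have : (1 - K : 𝓗 →L[ℂ] 𝓗) x = 0 := by
      simp [ContinuousLinearMap.sub_apply, hKx]
    simp [ContinuousLinearMap.mul_apply, this]
  have h3 : lam • x - (A x + B x) = 0 := by
    simpa [ContinuousLinearMap.sub_apply, Algebra.algebraMap_eq_smul_one,
      ContinuousLinearMap.smul_apply, ContinuousLinearMap.add_apply] using h2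
  exact (sub_eq_zero.mp h3).symm

lemma aux_resolvent {𝓗 : Type*} [NormedAddCommGroup 𝓗] [InnerProductSpace ℂ 𝓗] [CompleteSpace 𝓗]
    (A : 𝓗 →L[ℂ] 𝓗) (hA : IsSelfAdjoint A) (a b : ℝ)
    (hab : ∀ lam : ℝ, a < lam → lam < b → (lam : ℂ) ∉ spectrum ℂ A)
    (hlt : a < b) (z : 𝓗) :
    (b - a)/2 * ‖z‖ ≤ ‖A z - ((((a+b)/2 : ℝ)) : ℂ) • z‖ := by
  set μ : ℝ := (a + b)/2 with hμ
  set r : ℝ := (b - a)/2 with hrdef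
  have hr : 0 < r := by simp [hrdef]; linarith
  have hμa : a < μ := by simp [hμ]; linarith
  have hμb : μ < b := by simp [hμ]; linarith
  have hu0 : IsUnit (algebraMap ℂ (𝓗 →L[ℂ] 𝓗) (μ : ℂ) - A) :=
    spectrum.notMem_iff.mp (hab μ hμa hμb)
  have hu1 : IsUnit (A - algebraMap ℂ (𝓗 →L[ℂ] 𝓗) (μ : ℂ)) := by
    simpa [neg_sub] using hu0.neg
  obtain ⟨u, hu2⟩ := hu1
  have halg_sa : IsSelfAdjoint (algebraMap ℂ (𝓗 →L[ℂ] 𝓗) (μ : ℂ)) := by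
    rw [IsSelfAdjoint, ← algebraMap_star_comm]
    congr 1
    simp [Complex.star_def, Complex.conj_ofReal]
  have hSsa : IsSelfAdjoint ((u : 𝓗 →L[ℂ] 𝓗)) := by rw [hu2]; exact hA.sub halg_sa
  have hinv_sa : IsSelfAdjoint ((↑u⁻¹ : 𝓗 →L[ℂ] 𝓗)) := by
    have h1 : (↑u⁻¹ : 𝓗 →L[ℂ] 𝓗) * ↑u = 1 := u.inv_mul
    have h2 : (↑u : 𝓗 →L[ℂ] 𝓗) * star ↑u⁻¹ = 1 := by
      have h3 := congrArg star h1
      rw [star_mul, star_one, hSsa.star_eq] at h3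
      exact h3
    exact (left_inv_eq_right_inv h1 h2).symm
  have hspec : ∀ w ∈ spectrum ℂ ((↑u⁻¹ : 𝓗 →L[ℂ] 𝓗)), ‖w‖ ≤ r⁻¹ := by
    intro w hw
    have hw0 : w ≠ 0 := by
      rintro rfl
      exact spectrum.zero_notMem ℂ u⁻¹.isUnit hw
    set wu : ℂˣ := Units.mk0 w hw0 with hwu
    have hwinv : ((wu⁻¹ : ℂˣ) : ℂ) ∈ spectrum ℂ ((↑u : 𝓗 →L[ℂ] 𝓗)) := by
      rw [spectrum.inv_mem_iff]
      simpa [hwu] using hw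
    have hwS : (w⁻¹ : ℂ) ∈ spectrum ℂ (A - algebraMap ℂ (𝓗 →L[ℂ] 𝓗) (μ : ℂ)) := by
      rw [← hu2]; simpa [hwu] using hwinv
    rw [← spectrum.sub_singleton_eq] at hwS
    obtain ⟨c, hc, d, hd, hcd⟩ := Set.mem_sub.mp hwS
    rw [Set.mem_singleton_iff] at hd
    subst hd
    have hcre : c = (c.re : ℂ) := hA.mem_spectrum_eq_re hc
    have hnot : c.re ≤ a ∨ b ≤ c.re := by
      by_contra hcon
      push_neg at hcon
      exact hab c.re hcon.1 hcon.2 (hcre ▸ hc)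
    have hdist : r ≤ |c.re - μ| := by
      rcases hnot with h | h
      · rw [abs_sub_comm, abs_of_nonneg (by simp [hμ]; linarith)]; simp [hμ]; linarith
      · rw [abs_of_nonneg (by simp [hμ]; linarith)]; simp [hμ]; linarith
    have hnorm : ‖(w⁻¹ : ℂ)‖ = |c.re - μ| := by
      rw [← hcd, hcre]
      rw [← Complex.ofReal_sub, Complex.norm_real, Real.norm_eq_abs]
      simp
    have hrw : r ≤ ‖(w⁻¹ : ℂ)‖ := hnorm ▸ hdist
    rw [norm_inv] at hrw
    rw [← inv_inv ‖w‖]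
    exact inv_anti₀ (by positivity) hrw
  have hnorminv : ‖(↑u⁻¹ : 𝓗 →L[ℂ] 𝓗)‖ ≤ r⁻¹ := by
    have hsr := hinv_sa.spectralRadius_eq_nnnorm
    have hle : spectralRadius ℂ ((↑u⁻¹ : 𝓗 →L[ℂ] 𝓗)) ≤ ENNReal.ofReal r⁻¹ := by
      rw [spectralRadius]
      refine iSup₂_le fun w hw => ?_
      rw [← enorm_eq_nnnorm, ← ofReal_norm]
      exact ENNReal.ofReal_le_ofReal (hspec w hw)
    rw [hsr, ← enorm_eq_nnnorm, ← ofReal_norm] at hle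
    exact (ENNReal.ofReal_le_ofReal_iff (by positivity)).mp hle
  have hz : ‖z‖ ≤ r⁻¹ * ‖(↑u : 𝓗 →L[ℂ] 𝓗) z‖ := by
    have h1 : (↑u⁻¹ : 𝓗 →L[ℂ] 𝓗) ((↑u : 𝓗 →L[ℂ] 𝓗) z) = z := by
      rw [← ContinuousLinearMap.mul_apply, u.inv_mul, ContinuousLinearMap.one_apply]
    calc ‖z‖ = ‖(↑u⁻¹ : 𝓗 →L[ℂ] 𝓗) ((↑u : 𝓗 →L[ℂ] 𝓗) z)‖ := by rw [h1]
    _ ≤ ‖(↑u⁻¹ : 𝓗 →L[ℂ] 𝓗)‖ * ‖(↑u : 𝓗 →L[ℂ] 𝓗) z‖ := ContinuousLinearMap.le_opNorm _ _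
    _ ≤ r⁻¹ * ‖(↑u : 𝓗 →L[ℂ] 𝓗) z‖ := by
        apply mul_le_mul_of_nonneg_right hnorminv (norm_nonneg _)
  have huz : (↑u : 𝓗 →L[ℂ] 𝓗) z = A z - ((μ : ℝ) : ℂ) • z := by
    rw [hu2]
    simp [ContinuousLinearMap.sub_apply, Algebra.algebraMap_eq_smul_one]
  rw [huz] at hz
  have hfin := mul_le_mul_of_nonneg_left hz (le_of_lt hr)
  rw [← mul_assoc, mul_inv_cancel₀ hr.ne', one_mul] at hfin
  exact hfin

lemma aux_norm_sum_sq {𝓗 : Type*} [NormedAddCommGroup 𝓗] [InnerProductSpace ℂ 𝓗]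
    {ι : Type*} [Fintype ι] (v : ι → 𝓗) (h : ∀ i j, i ≠ j → ⟪v i, v j⟫_ℂ = 0) :
    ‖∑ i, v i‖ ^ 2 = ∑ i, ‖v i‖ ^ 2 := by
  classical
  have key : ⟪∑ i, v i, ∑ j, v j⟫_ℂ = ∑ i, ⟪v i, v i⟫_ℂ := by
    rw [sum_inner]
    refine Finset.sum_congr rfl fun i _ => ?_
    rw [inner_sum]
    rw [Finset.sum_eq_single i]
    · intro j _ hji
      exact h i j (fun he => hji he.symm)
    · intro hi
      exact absurd (Finset.mem_univ i) hi
  have key2 : ((‖∑ i, v i‖ : ℝ) : ℂ) ^ 2 = ∑ i, ((‖v i‖ : ℝ) : ℂ) ^ 2 := by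
    simpa [inner_self_eq_norm_sq_to_K] using key
  exact_mod_cast key2

set_option maxHeartbeats 1000000 in
theorem stmt_14 {𝓗 : Type*} [NormedAddCommGroup 𝓗] [InnerProductSpace ℂ 𝓗]
    [CompleteSpace 𝓗]
    (A B : 𝓗 →L[ℂ] 𝓗) (hA : IsSelfAdjoint A) (hB : IsSelfAdjoint B)
    (N : ℕ)
    -- the range of `B` has finite dimension at most `N`
    (hBfin : FiniteDimensional ℂ (LinearMap.range B.toLinearMap))
    (hBrank : Module.finrank ℂ (LinearMap.range B.toLinearMap) ≤ N)
    (a b : ℝ)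
    -- `(a, b)` is disjoint from the spectrum of `A`
    (hab : ∀ lam : ℝ, a < lam → lam < b → (lam : ℂ) ∉ spectrum ℂ A) :
    -- the part of the spectrum of `A + B` in `(a, b)` is finite, of at most `N` points
    {lam : ℝ | a < lam ∧ lam < b ∧ (lam : ℂ) ∈ spectrum ℂ (A + B)}.Finite ∧
    {lam : ℝ | a < lam ∧ lam < b ∧ (lam : ℂ) ∈ spectrum ℂ (A + B)}.ncard ≤ N := by
  classical
  set Λ := {lam : ℝ | a < lam ∧ lam < b ∧ (lam : ℂ) ∈ spectrum ℂ (A + B)} with hΛ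
  have key : ∀ t : Finset ℝ, ↑t ⊆ Λ → t.card ≤ N := by
    intro t ht
    rcases t.eq_empty_or_nonempty with rfl | ⟨l₀, hl₀⟩
    · simp
    have hmem : ∀ l ∈ t, a < l ∧ l < b ∧ (l : ℂ) ∈ spectrum ℂ (A + B) := fun l hl => ht hl
    have hlt : a < b := lt_trans (hmem l₀ hl₀).1 (hmem l₀ hl₀).2.1
    set μ : ℝ := (a + b)/2 with hμ
    set r : ℝ := (b - a)/2 with hrdef
    have hr : 0 < r := by simp [hrdef]; linarith
    -- eigenvectors
    have hexists : ∀ l ∈ t, ∃ x : 𝓗, x ≠ 0 ∧ A x + B x = (l : ℂ) • x := by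
      intro l hl
      obtain ⟨h1, h2, h3⟩ := hmem l hl
      exact aux_eigen A B hBfin (l : ℂ) (spectrum.notMem_iff.mp (hab l h1 h2)) h3
    choose! x hx0 hxeig using hexists
    -- orthogonality of eigenvectors
    have hABsym := (hA.add hB).isSymmetric
    have horth : ∀ i ∈ t, ∀ j ∈ t, i ≠ j → ⟪x i, x j⟫_ℂ = 0 := by
      intro i hi j hj hij
      have h1 : ⟪(A + B) (x i), x j⟫_ℂ = ⟪x i, (A + B) (x j)⟫_ℂ := hABsym _ _
      have hEi : (A + B) (x i) = (i : ℂ) • x i := by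
        rw [ContinuousLinearMap.add_apply]; exact hxeig i hi
      have hEj : (A + B) (x j) = (j : ℂ) • x j := by
        rw [ContinuousLinearMap.add_apply]; exact hxeig j hj
      rw [hEi, hEj, inner_smul_left, inner_smul_right] at h1
      rw [Complex.conj_ofReal] at h1
      have hne : (i : ℂ) ≠ (j : ℂ) := by exact_mod_cast hij
      have := sub_eq_zero.mpr h1
      rw [← sub_mul] at this
      rcases mul_eq_zero.mp this with h | h
      · exact absurd (sub_eq_zero.mp h) hne
      · exact h
    -- linear independence of (B (x i))
    haveI := hBfin
    have hli : LinearIndependent ℂ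
        (fun i : t => (⟨B (x (i : ℝ)), LinearMap.mem_range_self _ _⟩ :
          LinearMap.range B.toLinearMap)) := by
      rw [Fintype.linearIndependent_iff]
      intro c hc i
      -- push the relation to 𝓗
      have hc' : ∑ i : t, c i • B (x (i : ℝ)) = 0 := by
        have := congrArg (Subtype.val) hc
        simpa using this
      by_contra hci
      -- the combination y
      set y : 𝓗 := ∑ i : t, c i • x (i : ℝ) with hy
      have hBx : ∀ i : t, B (x (i : ℝ)) = ((i : ℝ) : ℂ) • x (i : ℝ) - A (x (i : ℝ)) := by
        intro i
        have := hxeig (i : ℝ) i.2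
        rw [← this]; abel
      have hAy : A y - ((μ : ℝ) : ℂ) • y
          = ∑ i : t, (c i * ((((i : ℝ) - μ : ℝ)) : ℂ)) • x (i : ℝ) := by
        have e1 : A y = ∑ i : t, (c i * ((i : ℝ) : ℂ)) • x (i : ℝ) := by
          have e2 : ∑ i : t, c i • (((i : ℝ) : ℂ) • x (i : ℝ) - A (x (i : ℝ))) = 0 := by
            rw [← hc']
            exact Finset.sum_congr rfl fun i _ => by rw [hBx i]
          have e3 : ∑ i : t, c i • (((i : ℝ) : ℂ) • x (i : ℝ))
              - ∑ i : t, c i • A (x (i : ℝ)) = 0 := by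
            rw [← Finset.sum_sub_distrib]
            simpa [smul_sub] using e2
          have e4 : A y = ∑ i : t, c i • A (x (i : ℝ)) := by
            rw [hy, map_sum]
            exact Finset.sum_congr rfl fun i _ => by rw [map_smul]
          rw [e4, ← sub_eq_zero.mp e3]
          exact Finset.sum_congr rfl fun i _ => smul_smul _ _ _
        rw [e1, hy, Finset.smul_sum, ← Finset.sum_sub_distrib]
        refine Finset.sum_congr rfl fun i _ => ?_
        rw [smul_smul, ← sub_smul]
        congr 1
        push_cast
        ring
      -- norms
      have horth' : ∀ p q : t, p ≠ q →
          ⟪(c p * ((((p : ℝ) - μ : ℝ)) : ℂ)) • x (p : ℝ),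
           (c q * ((((q : ℝ) - μ : ℝ)) : ℂ)) • x (q : ℝ)⟫_ℂ = 0 := by
        intro p q hpq
        rw [inner_smul_left, inner_smul_right,
          horth (p : ℝ) p.2 (q : ℝ) q.2 (fun he => hpq (Subtype.ext he))]
        ring
      have horth'' : ∀ p q : t, p ≠ q →
          ⟪c p • x (p : ℝ), c q • x (q : ℝ)⟫_ℂ = 0 := by
        intro p q hpq
        rw [inner_smul_left, inner_smul_right,
          horth (p : ℝ) p.2 (q : ℝ) q.2 (fun he => hpq (Subtype.ext he))]
        ring
      have hn1 : ‖A y - ((μ : ℝ) : ℂ) • y‖ ^ 2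
          = ∑ i : t, ‖c i‖ ^ 2 * ((i : ℝ) - μ) ^ 2 * ‖x (i : ℝ)‖ ^ 2 := by
        rw [hAy, aux_norm_sum_sq _ horth']
        refine Finset.sum_congr rfl fun p _ => ?_
        have hcn : ‖(c p * ((((p : ℝ) - μ : ℝ)) : ℂ))‖ = ‖c p‖ * |(p : ℝ) - μ| := by
          rw [norm_mul, Complex.norm_real, Real.norm_eq_abs]
        rw [norm_smul, hcn, mul_pow, mul_pow, sq_abs]
        try ring
      have hn2 : ‖y‖ ^ 2 = ∑ i : t, ‖c i‖ ^ 2 * ‖x (i : ℝ)‖ ^ 2 := by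
        rw [hy, aux_norm_sum_sq _ horth'']
        refine Finset.sum_congr rfl fun i _ => ?_
        rw [norm_smul, mul_pow]
      -- the strict inequality
      have hstrict : ∑ p : t, ‖c p‖ ^ 2 * ((p : ℝ) - μ) ^ 2 * ‖x (p : ℝ)‖ ^ 2
          < r ^ 2 * ∑ p : t, ‖c p‖ ^ 2 * ‖x (p : ℝ)‖ ^ 2 := by
        rw [Finset.mul_sum]
        refine Finset.sum_lt_sum (fun p _ => ?_) ⟨i, Finset.mem_univ i, ?_⟩
        · have hsq : ((p : ℝ) - μ) ^ 2 ≤ r ^ 2 := by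
            have h1 := (hmem (p : ℝ) p.2).1
            have h2 := (hmem (p : ℝ) p.2).2.1
            nlinarith [mul_pos (sub_pos.mpr h1) (sub_pos.mpr h2), hμ, hrdef]
          have hmm := mul_le_mul_of_nonneg_left hsq
            (mul_nonneg (sq_nonneg ‖c p‖) (sq_nonneg ‖x (p : ℝ)‖))
          nlinarith [hmm]
        · have hsq : ((i : ℝ) - μ) ^ 2 < r ^ 2 := by
            have h1 := (hmem (i : ℝ) i.2).1
            have h2 := (hmem (i : ℝ) i.2).2.1
            nlinarith [mul_pos (sub_pos.mpr h1) (sub_pos.mpr h2), hμ, hrdef]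
          have hcpos : 0 < ‖c i‖ ^ 2 := pow_pos (norm_pos_iff.mpr hci) 2
          have hxpos : 0 < ‖x (i : ℝ)‖ ^ 2 :=
            pow_pos (norm_pos_iff.mpr (hx0 (i : ℝ) i.2)) 2
          nlinarith [mul_pos (sub_pos.mpr hsq) (mul_pos hcpos hxpos)]
      -- resolvent bound
      have hres := aux_resolvent A hA a b hab hlt y
      have hres2 : r ^ 2 * ‖y‖ ^ 2 ≤ ‖A y - ((μ : ℝ) : ℂ) • y‖ ^ 2 := by
        have h0 : 0 ≤ r * ‖y‖ := by positivity
        calc r ^ 2 * ‖y‖ ^ 2 = (r * ‖y‖) ^ 2 := by ring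
        _ ≤ ‖A y - ((μ : ℝ) : ℂ) • y‖ ^ 2 := by
            apply pow_le_pow_left₀ h0
            exact hres
      rw [hn1, hn2] at hres2
      linarith [hres2, hstrict]
    have hcard := hli.fintype_card_le_finrank
    have : Fintype.card t = t.card := Fintype.card_coe t
    omega
  have hfin : Λ.Finite := by
    by_contra hinf
    have hinf' : Λ.Infinite := hinf
    obtain ⟨t, hts, hcard⟩ := hinf'.exists_subset_card_eq (N + 1)
    have := key t hts
    omega
  refine ⟨hfin, ?_⟩
  have h2 := key hfin.toFinset (by simp [Set.Finite.coe_toFinset])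
  rwa [Set.ncard_eq_toFinset_card _ hfin]
end

section
/- Let v : ℕ → ℝ be a bounded function and let W be the bounded self-adjoint multiplication operator on ℓ²(ℕ;ℂ) given by (W f)(x) = v(x)·f(x); set H = D^α + W. Assume that for every integer r ≥ 1 there exist infinitely many m ∈ ℕ such that v vanishes identically on the p-adic interval {y ∈ ℕ : m·p^r ≤ y < (m+1)·p^r}. Then for every integer r ≥ 1 the eigenspace {f ∈ ℓ²(ℕ;ℂ) : H f = κ^(r−1) f} is infinite-dimensional; consequently the spectrum of D^α, namely {0} ∪ {κ^(r−1) : r ≥ 1}, is contained in the spectrum of H. -/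
namespace Stmt19

lemma div_eq_iff' {n k x : ℕ} (hn : 0 < n) :
    x / n = k ↔ k * n ≤ x ∧ x < (k + 1) * n := by
  constructor
  · rintro rfl
    refine ⟨Nat.div_mul_le_self _ _, ?_⟩
    rw [add_mul, one_mul]
    exact Nat.lt_div_mul_add hn
  · rintro ⟨h1, h2⟩
    exact Nat.div_eq_of_lt_le h1 h2

lemma mem_block_iff {p : ℕ} (hp : 0 < p) {s x y : ℕ} :
    y ∈ block p s x ↔ y / p ^ s = x / p ^ s := by
  rw [block, Finset.mem_Ico, div_eq_iff' (pow_pos hp s)]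

lemma card_block {p : ℕ} (s x : ℕ) : (block p s x).card = p ^ s := by
  rw [block, Nat.card_Ico, add_mul, one_mul, Nat.add_sub_cancel_left]

lemma div_congr_of_le {p u w r s : ℕ} (h : u / p ^ r = w / p ^ r) (hrs : r ≤ s) :
    u / p ^ s = w / p ^ s := by
  obtain ⟨d, rfl⟩ : ∃ d, s = r + d := ⟨s - r, by omega⟩
  rw [pow_add, ← Nat.div_div_eq_div_mul, ← Nat.div_div_eq_div_mul, h]

/-- The eigenfunction profile. -/
noncomputable def Fv (p r m : ℕ) (x : ℕ) : ℂ :=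
  (if x / p ^ r = m * p then 1 else 0) - (if x / p ^ r = m * p + 1 then 1 else 0)

/-- The eigenfunction as an element of `ℓ²`. -/
noncomputable def phi (p r m : ℕ) : lp (fun _ : ℕ => ℂ) 2 :=
  (∑ y ∈ Finset.Ico (m * p ^ (r + 1)) (m * p ^ (r + 1) + p ^ r), lp.single 2 y (1 : ℂ))
  - ∑ y ∈ Finset.Ico (m * p ^ (r + 1) + p ^ r) (m * p ^ (r + 1) + 2 * p ^ r),
      lp.single 2 y (1 : ℂ)

lemma single_one_apply (y x : ℕ) :
    (lp.single 2 y (1 : ℂ) : lp (fun _ : ℕ => ℂ) 2) x = if x = y then 1 else 0 := by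
  rcases eq_or_ne x y with rfl | h
  · rw [lp.single_apply_self, if_pos rfl]
  · rw [lp.single_apply_ne _ _ _ h, if_neg h]

lemma sum_single_apply (s : Finset ℕ) (x : ℕ) :
    ((∑ y ∈ s, lp.single 2 y (1 : ℂ) : lp (fun _ : ℕ => ℂ) 2) : ∀ _ : ℕ, ℂ) x
      = if x ∈ s then 1 else 0 := by
  rw [lp.coeFn_sum, Finset.sum_apply]
  rw [Finset.sum_congr rfl fun y _ => single_one_apply y x]
  exact Finset.sum_ite_eq s x (fun _ => 1)

lemma phi_apply {p : ℕ} (hp : 0 < p) (r m x : ℕ) :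
    (phi p r m : ∀ _ : ℕ, ℂ) x = Fv p r m x := by
  have hps : 0 < p ^ r := pow_pos hp r
  have hA : m * p ^ (r + 1) = m * p * p ^ r := by ring
  have hB : m * p ^ (r + 1) + p ^ r = (m * p + 1) * p ^ r := by ring
  have hC : m * p ^ (r + 1) + 2 * p ^ r = (m * p + 1 + 1) * p ^ r := by ring
  rw [phi, lp.coeFn_sub, Pi.sub_apply, sum_single_apply, sum_single_apply, Fv]
  have e1 : x / p ^ r = m * p ↔ m * p * p ^ r ≤ x ∧ x < m * p * p ^ r + p ^ r := by
    rw [div_eq_iff' hps, show (m * p + 1) * p ^ r = m * p * p ^ r + p ^ r from by ring]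
  have e2 : x / p ^ r = m * p + 1 ↔
      m * p * p ^ r + p ^ r ≤ x ∧ x < m * p * p ^ r + 2 * p ^ r := by
    rw [div_eq_iff' hps, show (m * p + 1 + 1) * p ^ r = m * p * p ^ r + 2 * p ^ r from by ring,
      show (m * p + 1) * p ^ r = m * p * p ^ r + p ^ r from by ring]
  simp only [Finset.mem_Ico, hA, hB, hC, e1, e2]

lemma Fv_block_const {p : ℕ} (hp : 0 < p) {r m s x : ℕ} (hs : s ≤ r) :
    ∀ y ∈ block p s x, Fv p r m y = Fv p r m x := by
  intro y hy
  have h : y / p ^ r = x / p ^ r := div_congr_of_le ((mem_block_iff hp).1 hy) hs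
  rw [Fv, Fv, h]

lemma sum_Fv_block_le {p : ℕ} (hp : 0 < p) {r m s : ℕ} (hs : s ≤ r) (x : ℕ) :
    ∑ y ∈ block p s x, Fv p r m y = (p : ℂ) ^ s * Fv p r m x := by
  rw [Finset.sum_congr rfl (Fv_block_const hp hs), Finset.sum_const, card_block,
    nsmul_eq_mul]
  push_cast
  ring

lemma div_shift {p : ℕ} (hp : 2 ≤ p) {r m y : ℕ} (hy : y / p ^ r = m * p) :
    (y + p ^ r) / p ^ r = m * p + 1 ∧ (y + p ^ r) / p ^ (r + 1) = y / p ^ (r + 1) := by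
  have hp0 : 0 < p := by omega
  have hps : 0 < p ^ r := pow_pos hp0 r
  have h1 : (y + p ^ r) / p ^ r = m * p + 1 := by rw [Nat.add_div_right _ hps, hy]
  refine ⟨h1, ?_⟩
  have e : ∀ u : ℕ, u / p ^ (r + 1) = u / p ^ r / p := by
    intro u; rw [pow_succ, Nat.div_div_eq_div_mul]
  rw [e, e, h1, hy, Nat.mul_div_cancel m hp0, mul_comm, Nat.mul_add_div hp0,
    Nat.div_eq_of_lt (by omega), add_zero]

lemma sum_Fv_block_gt {p : ℕ} (hp : 2 ≤ p) {r m s : ℕ} (hs : r + 1 ≤ s) (x : ℕ) :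
    ∑ y ∈ block p s x, Fv p r m y = 0 := by
  have hp0 : 0 < p := by omega
  have hps : 0 < p ^ r := pow_pos hp0 r
  simp only [Fv]
  rw [Finset.sum_sub_distrib, Finset.sum_boole, Finset.sum_boole, sub_eq_zero]
  norm_cast
  refine Finset.card_bij' (fun y _ => y + p ^ r) (fun z _ => z - p ^ r) ?_ ?_ ?_ ?_
  · intro y hy
    rw [Finset.mem_filter] at hy ⊢
    obtain ⟨hyb, hyd⟩ := hy
    obtain ⟨h1, h2⟩ := div_shift hp hyd
    refine ⟨?_, h1⟩
    rw [mem_block_iff hp0] at hyb ⊢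
    exact (div_congr_of_le h2 hs).trans hyb
  · intro z hz
    rw [Finset.mem_filter] at hz ⊢
    obtain ⟨hzb, hzd⟩ := hz
    have hle : p ^ r ≤ z := (Nat.one_le_div_iff hps).1 (by omega)
    have hzy : z - p ^ r + p ^ r = z := by omega
    have hyd : (z - p ^ r) / p ^ r = m * p := by
      have h := Nat.add_div_right (z - p ^ r) hps
      rw [hzy, hzd] at h
      omega
    obtain ⟨h1, h2⟩ := div_shift hp hyd
    rw [hzy] at h2
    refine ⟨?_, hyd⟩
    rw [mem_block_iff hp0] at hzb ⊢
    exact (div_congr_of_le h2.symm hs).trans hzb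
  · intro y _
    show y + p ^ r - p ^ r = y
    omega
  · intro z hz
    rw [Finset.mem_filter] at hz
    have hle : p ^ r ≤ z := (Nat.one_le_div_iff hps).1 (by omega)
    show z - p ^ r + p ^ r = z
    omega

lemma kappa_pos {p : ℕ} (hp : 2 ≤ p) (α : ℝ) : 0 < kappa p α :=
  Real.rpow_pos_of_pos (by exact_mod_cast (by omega : 0 < p)) _

lemma kappa_lt_one {p : ℕ} (hp : 2 ≤ p) {α : ℝ} (hα : 0 < α) : kappa p α < 1 :=
  Real.rpow_lt_one_of_one_lt_of_neg (by exact_mod_cast (by omega : 1 < p))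
    (neg_lt_zero.mpr hα)

lemma summable_u {κ : ℝ} (h0 : 0 ≤ κ) (h1 : κ < 1) (r : ℕ) :
    Summable (fun t : ℕ => if t < r then (0 : ℝ) else (1 - κ) * κ ^ t) := by
  have hgeo : Summable (fun t : ℕ => (1 - κ) * κ ^ t) :=
    (summable_geometric_of_lt_one h0 h1).mul_left _
  have h1k : (0:ℝ) ≤ 1 - κ := by linarith
  refine Summable.of_norm_bounded hgeo ?_
  intro t
  by_cases h : t < r
  · rw [if_pos h, norm_zero]
    positivity
  · rw [if_neg h, Real.norm_eq_abs, abs_of_nonneg (by positivity)]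

lemma tsum_tail {κ : ℝ} (h0 : 0 ≤ κ) (h1 : κ < 1) (r : ℕ) :
    ∑' t : ℕ, (if t < r then (0 : ℝ) else (1 - κ) * κ ^ t) = κ ^ r := by
  have hu := summable_u h0 h1 r
  rw [← hu.sum_add_tsum_nat_add r]
  have hz : ∑ i ∈ Finset.range r, (if i < r then (0 : ℝ) else (1 - κ) * κ ^ i) = 0 :=
    Finset.sum_eq_zero fun i hi => if_pos (Finset.mem_range.1 hi)
  rw [hz, zero_add]
  have he : ∀ t : ℕ, (if t + r < r then (0 : ℝ) else (1 - κ) * κ ^ (t + r))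
      = ((1 - κ) * κ ^ r) * κ ^ t := by
    intro t; rw [if_neg (by omega), pow_add]; ring
  rw [tsum_congr he, tsum_mul_left, tsum_geometric_of_lt_one h0 h1]
  have hne : (1 : ℝ) - κ ≠ 0 := by linarith
  field_simp

lemma D_phi_apply {p : ℕ} (hp : 2 ≤ p) {α : ℝ} (hα : 0 < α)
    (D : lp (fun _ : ℕ => ℂ) 2 →L[ℂ] lp (fun _ : ℕ => ℂ) 2)
    (hD : IsDyson p α D) (r m x : ℕ) :
    (D (phi p r m) : ∀ _ : ℕ, ℂ) x = ((kappa p α ^ r : ℝ) : ℂ) * Fv p r m x := by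
  have hp0 : 0 < p := by omega
  set κ := kappa p α with hκ
  have hκ0 : 0 < κ := kappa_pos hp α
  have hκ1 : κ < 1 := kappa_lt_one hp hα
  rw [hD]
  have hterm : ∀ t : ℕ,
      (((1 - κ) * κ ^ t : ℝ) : ℂ) * ((phi p r m) x
        - ((p : ℂ) ^ (t + 1))⁻¹ * ∑ y ∈ block p (t + 1) x, (phi p r m) y)
      = ((if t < r then (0 : ℝ) else (1 - κ) * κ ^ t : ℝ) : ℂ) * Fv p r m x := by
    intro t
    rw [phi_apply hp0, Finset.sum_congr rfl fun y _ => phi_apply hp0 r m y]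
    by_cases h : t < r
    · rw [sum_Fv_block_le hp0 (by omega : t + 1 ≤ r), if_pos h]
      have hpc : ((p : ℂ)) ≠ 0 := by exact_mod_cast hp0.ne'
      rw [inv_mul_cancel_left₀ (pow_ne_zero _ hpc)]
      simp
    · rw [sum_Fv_block_gt hp (by omega), if_neg h, mul_zero, sub_zero]
  rw [tsum_congr hterm, tsum_mul_right]
  congr 1
  have hu := summable_u hκ0.le hκ1 r
  have hmap := (hu.hasSum.mapL Complex.ofRealCLM).tsum_eq
  simp only [Complex.ofRealCLM_apply] at hmap
  rw [hmap, tsum_tail hκ0.le hκ1 r]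

/-- Evaluation at a point as a linear map on `ℓ²`. -/
noncomputable def evalLM (x : ℕ) : lp (fun _ : ℕ => ℂ) 2 →ₗ[ℂ] ℂ where
  toFun f := f x
  map_add' f g := by
    show (↑(f + g) : ∀ _ : ℕ, ℂ) x = (↑f : ∀ _ : ℕ, ℂ) x + (↑g : ∀ _ : ℕ, ℂ) x
    rw [lp.coeFn_add, Pi.add_apply]
  map_smul' c f := by
    show (↑(c • f) : ∀ _ : ℕ, ℂ) x = (RingHom.id ℂ) c • (↑f : ∀ _ : ℕ, ℂ) x
    rw [lp.coeFn_smul, Pi.smul_apply]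
    rfl

lemma div_base {p : ℕ} (hp0 : 0 < p) (r m : ℕ) : m * p ^ (r + 1) / p ^ r = m * p := by
  rw [show m * p ^ (r + 1) = m * p * p ^ r from by ring,
    Nat.mul_div_cancel _ (pow_pos hp0 r)]

lemma Fv_base {p : ℕ} (hp : 2 ≤ p) (r m : ℕ) : Fv p r m (m * p ^ (r + 1)) = 1 := by
  rw [Fv, div_base (by omega) r m, if_pos rfl, if_neg (by omega)]
  norm_num

lemma Fv_base_ne {p : ℕ} (hp : 2 ≤ p) (r : ℕ) {m m' : ℕ} (hne : m' ≠ m) :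
    Fv p r m' (m * p ^ (r + 1)) = 0 := by
  have hp0 : 0 < p := by omega
  rw [Fv, div_base hp0 r m, if_neg, if_neg, sub_zero]
  · intro h
    have h1 : (m * p) % p = 0 := Nat.mul_mod_left _ _
    have h2 : (m' * p + 1) % p = 1 := by
      rw [mul_comm, Nat.mul_add_mod, Nat.mod_eq_of_lt (by omega)]
    rw [h] at h1
    omega
  · intro h
    exact hne (Nat.eq_of_mul_eq_mul_right hp0 h).symm

lemma W_phi {p : ℕ} (hp : 2 ≤ p) (v : ℕ → ℝ)
    (W : lp (fun _ : ℕ => ℂ) 2 →L[ℂ] lp (fun _ : ℕ => ℂ) 2)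
    (hW : ∀ (f : lp (fun _ : ℕ => ℂ) 2) (x : ℕ), W f x = (v x : ℂ) * f x)
    {r m : ℕ}
    (hm : ∀ y ∈ Finset.Ico (m * p ^ (r + 1)) ((m + 1) * p ^ (r + 1)), v y = 0)
    (x : ℕ) : (W (phi p r m) : ∀ _ : ℕ, ℂ) x = 0 := by
  have hp0 : 0 < p := by omega
  have hps : 0 < p ^ r := pow_pos hp0 r
  rw [hW, phi_apply hp0]
  by_cases hx : Fv p r m x = 0
  · rw [hx, mul_zero]
  · have hv : v x = 0 := by
      apply hm
      rw [Finset.mem_Ico]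
      have hdx : x / p ^ r = m * p ∨ x / p ^ r = m * p + 1 := by
        by_contra hc
        push_neg at hc
        exact hx (by rw [Fv, if_neg hc.1, if_neg hc.2, sub_zero])
      have hA : m * p ^ (r + 1) = m * p * p ^ r := by ring
      have hB : (m + 1) * p ^ (r + 1) = (m * p + p) * p ^ r := by ring
      rcases hdx with h | h <;> rw [div_eq_iff' hps] at h
      · refine ⟨by rw [hA]; exact h.1, ?_⟩
        rw [hB]
        exact lt_of_lt_of_le h.2 (Nat.mul_le_mul_right _ (by omega))
      · constructor
        · rw [hA]
          exact le_trans (Nat.mul_le_mul_right _ (by omega : m * p ≤ m * p + 1)) h.1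
        · rw [hB]
          exact lt_of_lt_of_le h.2 (Nat.mul_le_mul_right _ (by omega))
      
    rw [hv]
    simp

lemma eigen_eq {p : ℕ} (hp : 2 ≤ p) {α : ℝ} (hα : 0 < α)
    (D : lp (fun _ : ℕ => ℂ) 2 →L[ℂ] lp (fun _ : ℕ => ℂ) 2) (hD : IsDyson p α D)
    (v : ℕ → ℝ)
    (W : lp (fun _ : ℕ => ℂ) 2 →L[ℂ] lp (fun _ : ℕ => ℂ) 2)
    (hW : ∀ (f : lp (fun _ : ℕ => ℂ) 2) (x : ℕ), W f x = (v x : ℂ) * f x)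
    {r m : ℕ}
    (hm : ∀ y ∈ Finset.Ico (m * p ^ (r + 1)) ((m + 1) * p ^ (r + 1)), v y = 0) :
    (D + W) (phi p r m) = ((kappa p α ^ r : ℝ) : ℂ) • phi p r m := by
  apply lp.ext
  funext x
  rw [ContinuousLinearMap.add_apply, lp.coeFn_add, Pi.add_apply,
    D_phi_apply hp hα D hD r m x, W_phi hp v W hW hm x, add_zero, lp.coeFn_smul,
    Pi.smul_apply, phi_apply (by omega : 0 < p), smul_eq_mul]

lemma phi_ne_zero {p : ℕ} (hp : 2 ≤ p) (r m : ℕ) : phi p r m ≠ 0 := by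
  intro h
  have h2 : (phi p r m : ∀ _ : ℕ, ℂ) (m * p ^ (r + 1)) = 0 := by rw [h]; rfl
  rw [phi_apply (by omega : 0 < p), Fv_base hp r m] at h2
  exact one_ne_zero h2

lemma mem_spectrum_of_eigen
    {H : lp (fun _ : ℕ => ℂ) 2 →L[ℂ] lp (fun _ : ℕ => ℂ) 2} {μ : ℂ}
    {f : lp (fun _ : ℕ => ℂ) 2} (hf : f ≠ 0) (h : H f = μ • f) :
    μ ∈ spectrum ℂ H := by
  rw [spectrum.mem_iff]
  intro hunit
  apply hf
  obtain ⟨u, hu⟩ := hunit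
  have h0 : (algebraMap ℂ _ μ - H) f = 0 := by
    rw [ContinuousLinearMap.sub_apply, h, Algebra.algebraMap_eq_smul_one,
      ContinuousLinearMap.smul_apply, ContinuousLinearMap.one_apply, sub_self]
  have key : (↑u⁻¹ * ↑u : lp (fun _ : ℕ => ℂ) 2 →L[ℂ] lp (fun _ : ℕ => ℂ) 2) f = f := by
    rw [Units.inv_mul]
    rfl
  rw [← key, ContinuousLinearMap.mul_apply, hu, h0, map_zero]

end Stmt19

theorem stmt_19 (p : ℕ) (hp : 2 ≤ p) (α : ℝ) (hα : 0 < α)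
    (D : lp (fun _ : ℕ => ℂ) 2 →L[ℂ] lp (fun _ : ℕ => ℂ) 2)
    (hDsa : IsSelfAdjoint D) (hD : IsDyson p α D)
    -- `v` is a bounded real potential and `W` the corresponding self-adjoint
    -- multiplication operator on `ℓ²(ℕ; ℂ)`
    (v : ℕ → ℝ) (hv : ∃ C : ℝ, ∀ x : ℕ, |v x| ≤ C)
    (W : lp (fun _ : ℕ => ℂ) 2 →L[ℂ] lp (fun _ : ℕ => ℂ) 2)
    (hWsa : IsSelfAdjoint W)
    (hW : ∀ (f : lp (fun _ : ℕ => ℂ) 2) (x : ℕ), W f x = (v x : ℂ) * f x)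
    -- sparseness: for every rank `r ≥ 1` there are infinitely many p-adic intervals
    -- `[m p^r, (m+1) p^r)` of rank `r` on which `v` vanishes identically
    (hsparse : ∀ r : ℕ, 1 ≤ r →
      {m : ℕ | ∀ y ∈ Finset.Ico (m * p ^ r) ((m + 1) * p ^ r), v y = 0}.Infinite) :
    -- each eigenspace `{f | (D + W) f = κ^(r-1) f}` is infinite-dimensional …
    (∀ r : ℕ, ∃ g : ℕ → lp (fun _ : ℕ => ℂ) 2, LinearIndependent ℂ g ∧
      ∀ n : ℕ, (D + W) (g n) = ((kappa p α ^ r : ℝ) : ℂ) • g n) ∧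
    -- … hence `Spec(D^α) = {0} ∪ {κ^(r-1) : r ≥ 1} ⊆ Spec(D^α + W)`
    insert (0 : ℂ) {z : ℂ | ∃ r : ℕ, z = ((kappa p α ^ r : ℝ) : ℂ)} ⊆
      spectrum ℂ (D + W) := by
  have hp0 : 0 < p := by omega
  have hκ0 := Stmt19.kappa_pos hp α
  have hκ1 := Stmt19.kappa_lt_one hp hα
  have main : ∀ r : ℕ, ∃ g : ℕ → lp (fun _ : ℕ => ℂ) 2, LinearIndependent ℂ g ∧
      ∀ n : ℕ, (D + W) (g n) = ((kappa p α ^ r : ℝ) : ℂ) • g n := by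
    intro r
    have hinf := hsparse (r + 1) (by omega)
    let e := hinf.natEmbedding
    refine ⟨fun n => Stmt19.phi p r (e n), ?_, ?_⟩
    · rw [linearIndependent_iff']
      intro s c hsum i hi
      have h0 := congrArg (Stmt19.evalLM ((e i : ℕ) * p ^ (r + 1))) hsum
      rw [map_sum, map_zero] at h0
      simp only [map_smul, smul_eq_mul] at h0
      have hmain : Stmt19.evalLM ((e i : ℕ) * p ^ (r + 1)) (Stmt19.phi p r (e i)) = 1 := by
        show (Stmt19.phi p r (e i) : ∀ _ : ℕ, ℂ) _ = 1
        rw [Stmt19.phi_apply hp0, Stmt19.Fv_base hp]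
      have hoff : ∀ j ∈ s, j ≠ i →
          c j * Stmt19.evalLM ((e i : ℕ) * p ^ (r + 1)) (Stmt19.phi p r (e j)) = 0 := by
        intro j _ hne
        have hz : Stmt19.evalLM ((e i : ℕ) * p ^ (r + 1)) (Stmt19.phi p r (e j)) = 0 := by
          show (Stmt19.phi p r (e j) : ∀ _ : ℕ, ℂ) _ = 0
          rw [Stmt19.phi_apply hp0, Stmt19.Fv_base_ne hp]
          intro hcoe
          exact hne (e.injective (Subtype.ext hcoe))
        rw [hz, mul_zero]
      rw [Finset.sum_eq_single i hoff (fun h => absurd hi h)] at h0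
      rw [hmain, mul_one] at h0
      exact h0
    · intro n
      exact Stmt19.eigen_eq hp hα D hD v W hW (e n).2
  refine ⟨main, ?_⟩
  have hmem : ∀ r : ℕ, ((kappa p α ^ r : ℝ) : ℂ) ∈ spectrum ℂ (D + W) := by
    intro r
    obtain ⟨g, hli, heig⟩ := main r
    exact Stmt19.mem_spectrum_of_eigen (hli.ne_zero 0) (heig 0)
  intro z hz
  rcases Set.mem_insert_iff.1 hz with rfl | hz'
  · have h1 : Filter.Tendsto (fun r : ℕ => (kappa p α ^ r : ℝ)) Filter.atTop (nhds 0) :=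
      tendsto_pow_atTop_nhds_zero_of_lt_one hκ0.le hκ1
    have htend : Filter.Tendsto (fun r : ℕ => ((kappa p α ^ r : ℝ) : ℂ)) Filter.atTop
        (nhds 0) := by
      have h2 := (Complex.continuous_ofReal.tendsto 0).comp h1
      simp only [Function.comp_def, Complex.ofReal_zero] at h2
      exact h2
    exact (spectrum.isClosed (D + W)).mem_of_tendsto htend (Filter.Eventually.of_forall hmem)
  · obtain ⟨r, rfl⟩ := hz'
    exact hmem r
end
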